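/- arXiv:1412.7142 — 2 statements merged into one kernel-verified Lean document; each statement's English description precedes it below -/
import Mathlib

section
/- Let Ω be a compact oriented l-dimensional manifold with piecewise smooth boundary embedded in ℝ^m. Then the l-dimensional volume of Ω is at least its projection volume, where the projection volume is defined as the square root of the sum over all index tuples 1 ≤ i_1 < ... < i_l ≤ m of the square of the integral over Ω of dx_{i_1} ∧ ... ∧ dx_{i_l}. -/
open MeasureTheory

/-! The vector `x ↦ (f t x)_t` takes values in a Euclidean space, whose norm is
`√(∑ t, f t x ^ 2)`; the claim is then `‖∫ g‖ ≤ ∫ ‖g‖`, the triangle inequality for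
Bochner integrals (the integral form of Cauchy–Schwarz). -/

theorem sqrt_sum_sq_integral_le_integral_sqrt_sum_sq {ι X : Type*} [Fintype ι]
    [MeasurableSpace X] {μ : Measure X} {f : ι → X → ℝ} (hf : ∀ i, Integrable (f i) μ) :
    √(∑ i, (∫ x, f i x ∂μ) ^ 2) ≤ ∫ x, √(∑ i, f i x ^ 2) ∂μ := by
  let g : X → EuclideanSpace ℝ ι := fun x => WithLp.toLp 2 (f · x)
  have integral_g_apply (i : ι) : (∫ x, g x ∂μ) i = ∫ x, f i x ∂μ :=
    eval_integral_piLp hf i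
  calc √(∑ i, (∫ x, f i x ∂μ) ^ 2) = ‖∫ x, g x ∂μ‖ := by
        simp [EuclideanSpace.norm_eq, integral_g_apply]
    _ ≤ ∫ x, ‖g x‖ ∂μ := norm_integral_le_integral_norm g
    _ = ∫ x, √(∑ i, f i x ^ 2) ∂μ := by simp [g, EuclideanSpace.norm_eq]

theorem stmt_1_general (l m : ℕ) {Ω : Type*} [MeasurableSpace Ω] (μ : Measure Ω)
    (f : {t : Finset (Fin m) // t.card = l} → Ω → ℝ)
    (hf : ∀ t, Integrable (f t) μ) :
    Real.sqrt (∑ t, (∫ x, f t x ∂μ) ^ 2) ≤ ∫ x, Real.sqrt (∑ t, f t x ^ 2) ∂μ :=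
  sqrt_sum_sq_integral_le_integral_sqrt_sum_sq hf

/-- vol(Ω) ≥ vol_proj(Ω): a compact oriented `l`-dimensional manifold `Ω` with piecewise smooth
boundary embedded in `ℝ^m` is represented by its Riemannian volume measure `μ`; for each
increasing index tuple `t = (i₁ < ... < i_l)` (an `l`-element subset of `Fin m`), `f t x` is the
value of the form `dx_{i₁} ∧ ... ∧ dx_{i_l}` on the oriented unit `l`-volume of `Ω` at `x`, so
that `vol(Ω) = ∫_Ω sqrt (Σ_t (dx_{i₁} ∧ ... ∧ dx_{i_l})²)` is the right-hand side and
`vol_proj(Ω) = sqrt (Σ_t (∫_Ω dx_{i₁} ∧ ... ∧ dx_{i_l})²)` is the left-hand side. -/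
theorem stmt_1 (l m : ℕ) {Ω : Type*} [MeasurableSpace Ω] (μ : Measure Ω)
    (f : {t : Finset (Fin m) // t.card = l} → Ω → ℝ)
    (hf : ∀ t, Integrable (f t) μ)
    (hf2 : Integrable (fun x => Real.sqrt (∑ t, f t x ^ 2)) μ) :
    Real.sqrt (∑ t, (∫ x, f t x ∂μ) ^ 2) ≤ ∫ x, Real.sqrt (∑ t, f t x ^ 2) ∂μ :=
  stmt_1_general l m μ f hf
end

section
/- Let X be a simplicial complex of dimension n, 0 ≤ k ≤ n-1, and η_0, η_1 ∈ X^(k) with η_0 ∩ η_1 = τ a (k-1)-simplex. If the link X_τ is path connected (as a graph on its vertices and edges), then η_0 and η_1 are connected by a (k+1)-gallery in X. -/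
variable {V : Type*} [DecidableEq V]

/-- The set of `j`-dimensional simplices of a simplicial complex `K`. -/
def faces (K : Finset (Finset V)) (j : ℕ) : Finset (Finset V) :=
  K.filter fun σ => σ.card = j + 1

/-- `K` is closed under passing to (nonempty) faces. -/
def IsDownClosed (K : Finset (Finset V)) : Prop :=
  ∀ σ ∈ K, ∀ τ : Finset V, τ ⊆ σ → τ.Nonempty → τ ∈ K

/-- `η₀` and `η₁` are connected by a `(k+1)`-gallery with simplices in `F`. -/
def GalleryConnects (k : ℕ) (F : Finset (Finset V)) (η₀ η₁ : Finset V) : Prop :=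
  η₀ = η₁ ∨ ∃ (L : List (Finset V)) (h : L ≠ []),
    (∀ σ ∈ L, σ ∈ F) ∧ L.Chain' (fun a b => (a ∩ b).card = k + 1) ∧
    η₀ ⊆ L.head h ∧ η₁ ⊆ L.getLast h

/-- `a` and `b` are adjacent vertices of the link `X_τ`. -/
def LinkAdj (K : Finset (Finset V)) (τ : Finset V) (a b : V) : Prop :=
  a ∉ τ ∧ b ∉ τ ∧ a ≠ b ∧ insert a (insert b τ) ∈ K

/-- The link `X_τ` is path connected: any two of its vertices are joined by a path in its
`1`-skeleton. -/
def LinkConnected (K : Finset (Finset V)) (τ : Finset V) : Prop :=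
  ∀ u v : V, u ∉ τ → insert u τ ∈ K → v ∉ τ → insert v τ ∈ K →
    Relation.ReflTransGen (LinkAdj K τ) u v

/-
A path `u₀ = w₀, w₁, …, w_l = u₁` in the link of `τ` yields the simplices
`τ ∪ {w_i, w_{i+1}}`, consecutive ones sharing the `k`-face `τ ∪ {w_{i+1}}`. The gallery is built
from the end of the path backwards; a new simplex is prepended only when it is really needed, so
that consecutive simplices are distinct and hence meet in exactly `k + 1` vertices.
-/

theorem Finset.card_inter_eq_of_ne {σ ρ η : Finset V} {m : ℕ} (hσ : σ.card = m + 1)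
    (hρ : ρ.card = m + 1) (hησ : η ⊆ σ) (hηρ : η ⊆ ρ) (hη : η.card = m) (hne : σ ≠ ρ) :
    (σ ∩ ρ).card = m := by
  have hge : m ≤ (σ ∩ ρ).card := hη ▸ Finset.card_le_card (Finset.subset_inter hησ hηρ)
  have hlt : (σ ∩ ρ).card < m + 1 := by
    refine hσ ▸ Finset.card_lt_card
      (Finset.ssubset_iff_subset_ne.mpr ⟨Finset.inter_subset_left, fun h => ?_⟩)
    have hsub : σ ⊆ ρ := h ▸ Finset.inter_subset_right
    exact hne (Finset.eq_of_subset_of_card_le hsub (by omega))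
  omega

theorem GalleryConnects.of_subset {k : ℕ} {F : Finset (Finset V)}
    (hF : ∀ σ ∈ F, σ.card = k + 2) {σ ρ η η₁ : Finset V} (hσ : σ ∈ F) (hησ : η ⊆ σ)
    (hρσ : ρ ⊆ σ) (hρ : ρ.card = k + 1) (h : GalleryConnects k F ρ η₁) :
    GalleryConnects k F η η₁ := by
  rcases h with rfl | ⟨L, hL, hmem, hchain, hhead, hlast⟩
  · exact Or.inr ⟨[σ], List.cons_ne_nil _ _, by simpa using hσ, List.isChain_singleton _,
      hησ, hρσ⟩
  by_cases hηL : η ⊆ L.head hL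
  · exact Or.inr ⟨L, hL, hmem, hchain, hηL, hlast⟩
  refine Or.inr ⟨σ :: L, List.cons_ne_nil _ _, ?_, ?_, hησ, by rwa [List.getLast_cons hL]⟩
  · simpa only [List.mem_cons, forall_eq_or_imp] using ⟨hσ, hmem⟩
  · refine List.isChain_cons.mpr ⟨fun σ' hσ' => ?_, hchain⟩
    obtain rfl : σ' = L.head hL := by simpa [List.head?_eq_some_head hL, eq_comm] using hσ'
    refine Finset.card_inter_eq_of_ne (hF σ hσ) (hF _ (hmem _ (List.head_mem hL))) hρσ hhead
      hρ ?_
    rintro rfl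
    exact hηL hησ

theorem LinkAdj.insert_insert_mem_faces {K : Finset (Finset V)} {τ : Finset V} {a b : V}
    (h : LinkAdj K τ a b) : insert a (insert b τ) ∈ faces K (τ.card + 1) := by
  obtain ⟨ha, hb, hab, hK⟩ := h
  refine Finset.mem_filter.mpr ⟨hK, ?_⟩
  rw [Finset.card_insert_of_notMem (by simp [hab, ha]), Finset.card_insert_of_notMem hb]

theorem galleryConnects_of_reflTransGen_linkAdj {K : Finset (Finset V)} {τ : Finset V} {u v : V}
    (h : Relation.ReflTransGen (LinkAdj K τ) u v) :
    GalleryConnects τ.card (faces K (τ.card + 1)) (insert u τ) (insert v τ) := by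
  induction h using Relation.ReflTransGen.head_induction_on with
  | refl => exact Or.inl rfl
  | head hab _ ih =>
    exact ih.of_subset (fun σ hσ => (Finset.mem_filter.mp hσ).2) hab.insert_insert_mem_faces
      (Finset.insert_subset_insert _ (Finset.subset_insert _ _)) (Finset.subset_insert _ _)
      (Finset.card_insert_of_notMem hab.2.1)

theorem stmt_10_general (K : Finset (Finset V)) (k : ℕ)
    (η₀ η₁ : Finset V) (h₀ : η₀ ∈ faces K k) (h₁ : η₁ ∈ faces K k)
    (τ : Finset V) (hτ : η₀ ∩ η₁ = τ) (hτcard : τ.card = k)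
    (hlink : LinkConnected K τ) :
    GalleryConnects k (faces K (k + 1)) η₀ η₁ := by
  obtain ⟨hK₀, hcard₀⟩ := Finset.mem_filter.mp h₀
  obtain ⟨hK₁, hcard₁⟩ := Finset.mem_filter.mp h₁
  obtain ⟨u₀, hu₀, rfl⟩ := Finset.exists_eq_insert_iff.mpr
    ⟨hτ ▸ Finset.inter_subset_left, by omega⟩
  obtain ⟨u₁, hu₁, rfl⟩ := Finset.exists_eq_insert_iff.mpr
    ⟨hτ ▸ Finset.inter_subset_right, by omega⟩
  subst hτcard
  exact galleryConnects_of_reflTransGen_linkAdj (hlink u₀ u₁ hu₀ hK₀ hu₁ hK₁)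

/-- If `η₀, η₁ ∈ X^(k)` satisfy `η₀ ∩ η₁ = τ` with `τ` a `(k-1)`-simplex and the link `X_τ` is
path connected, then `η₀` and `η₁` are connected by a `(k+1)`-gallery in `X`. -/
theorem stmt_10 (K : Finset (Finset V)) (n k : ℕ) (hk : 1 ≤ k) (hkn : k + 1 ≤ n)
    (hdim : ∀ σ ∈ K, σ.card ≤ n + 1) (hdown : IsDownClosed K)
    (η₀ η₁ : Finset V) (h₀ : η₀ ∈ faces K k) (h₁ : η₁ ∈ faces K k)
    (τ : Finset V) (hτ : η₀ ∩ η₁ = τ) (hτcard : τ.card = k)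
    (hlink : LinkConnected K τ) :
    GalleryConnects k (faces K (k + 1)) η₀ η₁ :=
  stmt_10_general K k η₀ η₁ h₀ h₁ τ hτ hτcard hlink
end
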